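/- arXiv:2504.14006 — 2 statements merged into one kernel-verified Lean document; each statement's English description precedes it below -/
import Mathlib

section
/- In the measure setting, let K be an intermediate field with E ⊆ K ⊆ L and K ∩ k_L = k, and let F ∈ 𝒮(L/K). Then μ¹_{L/F}({F}) = 1 if and only if F is maximal with respect to inclusion in 𝒮(L/K). (In the Markov chain on 𝒮(L/K) with transition probability from F to F′ given by μ¹_{L/F}({F′}), this says that F is absorbing if and only if F is maximal.) -/
open IntermediateField

section MeasureSetting

variable (k E L : Type) [Field k] [Field E] [Field L]
  [Algebra k E] [Algebra E L] [Algebra k L] [IsScalarTower k E L]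

/-- `E` is regular over `k`: every element of `E` algebraic over `k` lies in `k`. -/
def IsRegularExtension (k E : Type*) [Field k] [Field E] [Algebra k E] : Prop :=
  ∀ x : E, IsAlgebraic k x → x ∈ (algebraMap k E).range

/-- `𝒮(L/K)`: the set of intermediate fields `F` with `K ⊆ F ⊆ L` and `F ∩ k_L = k`,
where `k_L` is the relative separable closure of `k` in `L`. -/
def SS (K : IntermediateField E L) : Set (IntermediateField E L) :=
  {F | K ≤ F ∧ F.restrictScalars k ⊓ separableClosure k L = ⊥}

variable (n : ℕ)

/-- The automorphism `σ ∈ Gal(L/K)` restricts to `ρ ∈ Gal(k_L/k)` on `k_L`. -/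
def RestrictsTo (K : IntermediateField E L) (σ : L ≃ₐ[K] L)
    (ρ : ↥(separableClosure k L) ≃ₐ[k] ↥(separableClosure k L)) : Prop :=
  ∀ x : ↥(separableClosure k L), σ (x : L) = ((ρ x : L))

/-- `σ̄` is a lift of `ρ̄` to `Gal(L/K)`. -/
def IsLift (K : IntermediateField E L)
    (ρ : Fin n → (↥(separableClosure k L) ≃ₐ[k] ↥(separableClosure k L)))
    (σ : Fin n → (L ≃ₐ[K] L)) : Prop :=
  ∀ i, RestrictsTo k E L K (σ i) (ρ i)

/-- The fixed field in `L` of the subgroup generated by `σ₁, …, σₙ ∈ Gal(L/K)`,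
viewed as an intermediate field of `L/E`. -/
def FixT (K : IntermediateField E L) (σ : Fin n → (L ≃ₐ[K] L)) : IntermediateField E L :=
  (IntermediateField.fixedField (Subgroup.closure (Set.range σ))).restrictScalars E

/-- The compositum `K·k_L`, as an intermediate field of `L/K`. -/
def compKL (K : IntermediateField E L) : IntermediateField K L :=
  IntermediateField.adjoin K ((separableClosure k L : IntermediateField k L) : Set L)

/-- `μ¹_{L/K}(X)` computed from a chosen lift `σ'` of `ρ̄`:
`|{τ̄ ∈ Gal(L/K·k_L)ⁿ : Fix(σ'₁τ₁,…,σ'ₙτₙ) ∈ X}| / [L : K·k_L]ⁿ`, where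
`Gal(L/K·k_L)` is the subgroup of `Gal(L/K)` fixing `k_L` (equivalently `K·k_L`)
pointwise. -/
noncomputable def mu1Lift (K : IntermediateField E L) (σ' : Fin n → (L ≃ₐ[K] L))
    (X : Set (IntermediateField E L)) : ℚ :=
  (Nat.card {τ : Fin n → ↥((compKL k E L K).fixingSubgroup) //
      FixT E L n K (fun i => σ' i * ((τ i : L ≃ₐ[K] L))) ∈ X} : ℚ) /
    ((Module.finrank ↥(compKL k E L K) L : ℚ)) ^ n

/-- `μ¹_{L/K}(X)`, in lift-free form: the set of tuples `σ̄'τ̄` with `σ̄'` a fixed lift of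
`ρ̄` and `τ̄ ∈ Gal(L/K·k_L)ⁿ` is exactly the set of tuples `ᾱ ∈ Gal(L/K)ⁿ` lifting `ρ̄`,
so `μ¹_{L/K}(X) = |{ᾱ ∈ Gal(L/K)ⁿ : ᾱ lifts ρ̄ and Fix(ᾱ) ∈ X}| / [L : K·k_L]ⁿ`. -/
noncomputable def mu1 (ρ : Fin n → (↥(separableClosure k L) ≃ₐ[k] ↥(separableClosure k L)))
    (K : IntermediateField E L) (X : Set (IntermediateField E L)) : ℚ :=
  (Nat.card {α : Fin n → (L ≃ₐ[K] L) //
      IsLift k E L n K ρ α ∧ FixT E L n K α ∈ X} : ℚ) /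
    ((Module.finrank ↥(compKL k E L K) L : ℚ)) ^ n

/-- The iterated measures `μⁱ_{L/K}` on singletons: `μ⁰_{L/K}` is the point mass at `K`,
and `μ^{i+1}_{L/K}({F}) = Σ_{F' ∈ 𝒮(L/K)} μⁱ_{L/K}({F'})·μ¹_{L/F'}({F})`. -/
noncomputable def muI (ρ : Fin n → (↥(separableClosure k L) ≃ₐ[k] ↥(separableClosure k L)))
    (K : IntermediateField E L) : ℕ → IntermediateField E L → ℚ
  | 0, F => ({K} : Set (IntermediateField E L)).indicator 1 F
  | (i+1), F => ∑ᶠ F' ∈ SS k E L K, muI ρ K i F' * mu1 k E L n ρ F' {F}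

end MeasureSetting

/-!
For `F` with `F ∩ k_L = k`, restriction `Gal(L/F) → Gal(k_L/k)` is onto (by Artin's theorem, as
the fixed field of its image is `F ∩ k_L = k`), and its kernel is `Gal(L/F·k_L)`. Hence the lifts
of `ρ̄` number exactly `[L : F·k_L]ⁿ`, and `μ¹_{L/F}({F}) = 1` says that every lift `σ̄` has
`Fix(σ̄) = F`. Such a fixed field contains `F` and, since the `ρᵢ`
generate `Gal(k_L/k)`, meets `k_L` only in `k`, so it lies in `𝒮(L/K)`: a maximal `F` is absorbing.
Conversely, if `F ⊊ F' ∈ 𝒮(L/K)`, a lift of `ρ̄` to `Gal(L/F')` is also a lift to `Gal(L/F)`, and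
its fixed field contains `F'`.
-/

theorem Subgroup.eq_top_of_fixed_mem_range {K M : Type*} [Field K] [Field M] [Algebra K M]
    (Γ : Subgroup (M ≃ₐ[K] M)) [Finite Γ]
    (hfix : ∀ y : M, (∀ g ∈ Γ, g y = y) → y ∈ Set.range (algebraMap K M)) : Γ = ⊤ := by
  refine eq_top_iff.mpr fun ρ _ => ?_
  -- Artin: `Γ` is the full automorphism group of `M` over its fixed field, which is `K`.
  have hρ : ∀ y : FixedPoints.subfield Γ M, ρ y = y := by
    intro y
    obtain ⟨c, hc⟩ := hfix y fun g hg => y.2 ⟨g, hg⟩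
    rw [← hc, ρ.commutes]
  obtain ⟨γ, hγ⟩ := FixedPoints.toAlgAut_surjective Γ M (AlgEquiv.ofRingEquiv (f := ρ) hρ)
  convert γ.2
  ext x
  exact (DFunLike.congr_fun hγ x).symm

theorem MonoidHom.card_fiber_eq_card_ker {G H : Type*} [Group G] [Group H] (f : G →* H) (g : G) :
    Nat.card {x // f x = f g} = Nat.card f.ker :=
  Nat.card_congr
    { toFun := fun x => ⟨g⁻¹ * x, by simp [x.2]⟩
      invFun := fun y => ⟨g * y, by simp [f.mem_ker.mp y.2]⟩
      left_inv := fun x => by simp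
      right_inv := fun y => by simp }

theorem Nat.card_subtype_and_eq_iff {α : Type*} [Finite α] {p q : α → Prop} :
    Nat.card {a // p a ∧ q a} = Nat.card {a // p a} ↔ ∀ a, p a → q a := by
  change Nat.card {a | p a ∧ q a} = Nat.card {a | p a} ↔ _
  rw [Nat.card_coe_set_eq, Nat.card_coe_set_eq]
  constructor
  · intro h a ha
    have hsub : {a | p a ∧ q a} ⊆ {a | p a} := fun _ h => h.1
    have hmem : a ∈ {a | p a ∧ q a} := (Set.eq_of_subset_of_ncard_le hsub h.ge).symm ▸ ha
    exact hmem.2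
  · intro h
    congr
    ext a
    exact ⟨And.left, fun ha => ⟨ha, h a ha⟩⟩

section MeasureSetting

variable {k E L : Type} [Field k] [Field E] [Field L]
  [Algebra k E] [Algebra E L] [Algebra k L] [IsScalarTower k E L]

theorem mem_fixT_iff {n : ℕ} {F : IntermediateField E L} (σ : Fin n → (L ≃ₐ[F] L)) (x : L) :
    x ∈ FixT E L n F σ ↔ ∀ i, σ i x = x := by
  rw [FixT, IntermediateField.mem_restrictScalars, IntermediateField.mem_fixedField_iff]
  exact (Subgroup.closure_le (K := MulAction.stabilizer (L ≃ₐ[F] L) x)).trans Set.range_subset_iff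

def IntermediateField.autOfLE {F F' : IntermediateField E L} (h : F ≤ F') (σ : L ≃ₐ[F'] L) :
    L ≃ₐ[F] L :=
  { σ with commutes' := fun x => σ.commutes ⟨x, h x.2⟩ }

theorem mem_bot_of_forall_fixed [FiniteDimensional E L] [IsGalois E L]
    {F : IntermediateField E L} (hF : F.restrictScalars k ⊓ separableClosure k L = ⊥)
    {x : L} (hx : x ∈ separableClosure k L) (hfix : ∀ σ : L ≃ₐ[F] L, σ x = x) :
    x ∈ (⊥ : IntermediateField k L) := by
  obtain ⟨f, rfl⟩ := (IsGalois.mem_range_algebraMap_iff_fixed x).mpr hfix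
  exact hF ▸ ⟨f.2, hx⟩

instance IntermediateField.isScalarTower_base (F : IntermediateField E L) :
    IsScalarTower k F L :=
  IsScalarTower.of_algebraMap_eq' rfl

variable [Normal k (separableClosure k L)]

variable (k) in
noncomputable def restrictSepClosureHom (F : IntermediateField E L) :
    (L ≃ₐ[F] L) →* (separableClosure k L ≃ₐ[k] separableClosure k L) :=
  (AlgEquiv.restrictNormalHom (separableClosure k L)).comp
    (MonoidHom.mk' (fun σ : L ≃ₐ[F] L => σ.restrictScalars k) fun _ _ => rfl)

theorem restrictSepClosureHom_apply (F : IntermediateField E L) (σ : L ≃ₐ[F] L)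
    (x : separableClosure k L) : (restrictSepClosureHom k F σ x : L) = σ x :=
  AlgEquiv.restrictNormal_commutes (σ.restrictScalars k) _ x

theorem restrictsTo_iff (F : IntermediateField E L) (σ : L ≃ₐ[F] L)
    (ρ : separableClosure k L ≃ₐ[k] separableClosure k L) :
    RestrictsTo k E L F σ ρ ↔ restrictSepClosureHom k F σ = ρ := by
  simp only [RestrictsTo, AlgEquiv.ext_iff, Subtype.ext_iff, restrictSepClosureHom_apply]

theorem ker_restrictSepClosureHom (F : IntermediateField E L) :
    (restrictSepClosureHom k F).ker = (compKL k E L F).fixingSubgroup := by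
  ext σ
  rw [MonoidHom.mem_ker, ← Subgroup.zpowers_le, ← IntermediateField.le_iff_le, compKL,
    IntermediateField.adjoin_le_iff, AlgEquiv.ext_iff]
  simp only [Subtype.ext_iff, restrictSepClosureHom_apply, AlgEquiv.one_apply, Subtype.forall]
  refine forall₂_congr fun x _ => ?_
  rw [SetLike.mem_coe, IntermediateField.mem_fixedField_iff]
  exact (Subgroup.zpowers_le (H := MulAction.stabilizer (L ≃ₐ[F] L) x)).symm

variable [FiniteDimensional E L] [IsGalois E L] {n : ℕ}

theorem restrictSepClosureHom_surjective {F : IntermediateField E L}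
    (hF : F.restrictScalars k ⊓ separableClosure k L = ⊥) :
    Function.Surjective (restrictSepClosureHom k F) := by
  have : Finite (restrictSepClosureHom k F).range := Set.finite_range _ |>.to_subtype
  refine MonoidHom.range_eq_top.mp <| Subgroup.eq_top_of_fixed_mem_range _ fun y hy => ?_
  have hfix (σ : L ≃ₐ[F] L) : σ y = y := by
    rw [← restrictSepClosureHom_apply, hy _ ⟨σ, rfl⟩]
  obtain ⟨c, hc⟩ := IntermediateField.mem_bot.mp (mem_bot_of_forall_fixed hF y.2 hfix)
  exact ⟨c, Subtype.ext hc⟩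

theorem exists_isLift {F : IntermediateField E L}
    (hF : F.restrictScalars k ⊓ separableClosure k L = ⊥)
    (ρ : Fin n → (separableClosure k L ≃ₐ[k] separableClosure k L)) :
    ∃ σ : Fin n → (L ≃ₐ[F] L), IsLift k E L n F ρ σ := by
  choose σ hσ using fun i => restrictSepClosureHom_surjective hF (ρ i)
  exact ⟨σ, fun i => (restrictsTo_iff F (σ i) (ρ i)).mpr (hσ i)⟩

theorem card_isLift {F : IntermediateField E L}
    (hF : F.restrictScalars k ⊓ separableClosure k L = ⊥)
    (ρ : Fin n → (separableClosure k L ≃ₐ[k] separableClosure k L)) :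
    Nat.card {σ : Fin n → (L ≃ₐ[F] L) // IsLift k E L n F ρ σ} =
      Module.finrank (compKL k E L F) L ^ n := by
  calc Nat.card {σ : Fin n → (L ≃ₐ[F] L) // IsLift k E L n F ρ σ}
      = Nat.card (∀ i, {σ : L ≃ₐ[F] L // restrictSepClosureHom k F σ = ρ i}) :=
        Nat.card_congr <| (Equiv.subtypeEquivRight fun σ : Fin n → (L ≃ₐ[F] L) =>
          forall_congr' fun i => restrictsTo_iff F (σ i) (ρ i)).trans
          (Equiv.subtypePiEquivPi (p := fun i σ => restrictSepClosureHom k F σ = ρ i))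
    _ = ∏ _ : Fin n, Nat.card (restrictSepClosureHom k F).ker := by
        rw [Nat.card_pi]
        refine Finset.prod_congr rfl fun i _ => ?_
        obtain ⟨σ, hσ⟩ := restrictSepClosureHom_surjective hF (ρ i)
        rw [← hσ, MonoidHom.card_fiber_eq_card_ker]
    _ = Module.finrank (compKL k E L F) L ^ n := by
        rw [Finset.prod_const, Finset.card_univ, Fintype.card_fin, ker_restrictSepClosureHom,
          IsGalois.card_fixingSubgroup_eq_finrank]

theorem mu1_eq_one_iff {F : IntermediateField E L}
    (hF : F.restrictScalars k ⊓ separableClosure k L = ⊥)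
    (ρ : Fin n → (separableClosure k L ≃ₐ[k] separableClosure k L))
    (X : Set (IntermediateField E L)) :
    mu1 k E L n ρ F X = 1 ↔ ∀ σ, IsLift k E L n F ρ σ → FixT E L n F σ ∈ X := by
  have hpos : ((Module.finrank (compKL k E L F) L : ℚ)) ^ n ≠ 0 :=
    pow_ne_zero _ (Nat.cast_ne_zero.mpr Module.finrank_pos.ne')
  rw [mu1, div_eq_one_iff_eq hpos, ← Nat.cast_pow, ← card_isLift hF ρ, Nat.cast_inj,
    Nat.card_subtype_and_eq_iff]

theorem fixT_inf_separableClosure_eq_bot {F : IntermediateField E L}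
    (hF : F.restrictScalars k ⊓ separableClosure k L = ⊥)
    {ρ : Fin n → (separableClosure k L ≃ₐ[k] separableClosure k L)}
    (hgen : Subgroup.closure (Set.range ρ) = ⊤)
    {σ : Fin n → (L ≃ₐ[F] L)} (hσ : IsLift k E L n F ρ σ) :
    (FixT E L n F σ).restrictScalars k ⊓ separableClosure k L = ⊥ := by
  refine eq_bot_iff.mpr fun x hx => ?_
  obtain ⟨hx, hxs⟩ : x ∈ FixT E L n F σ ∧ x ∈ separableClosure k L := hx
  rw [mem_fixT_iff] at hx
  have hstab : Subgroup.closure (Set.range ρ) ≤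
      MulAction.stabilizer (separableClosure k L ≃ₐ[k] separableClosure k L)
        (⟨x, hxs⟩ : separableClosure k L) := by
    rw [Subgroup.closure_le]
    rintro _ ⟨i, rfl⟩
    exact Subtype.ext ((hσ i ⟨x, hxs⟩).symm.trans (hx i))
  refine mem_bot_of_forall_fixed hF hxs fun τ => ?_
  have hτ : restrictSepClosureHom k F τ ⟨x, hxs⟩ = ⟨x, hxs⟩ := hstab (hgen ▸ Subgroup.mem_top _)
  rw [← restrictSepClosureHom_apply F τ ⟨x, hxs⟩, hτ]

end MeasureSetting

theorem statement10_general
    (k E L : Type) [Field k] [Field E] [Field L]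
    [Algebra k E] [Algebra E L] [Algebra k L] [IsScalarTower k E L]
    [FiniteDimensional E L] [IsGalois E L]
    [IsGalois k (separableClosure k L)]
    (n : ℕ)
    (ρ : Fin n → (↥(separableClosure k L) ≃ₐ[k] ↥(separableClosure k L)))
    (hgen : Subgroup.closure (Set.range ρ) = ⊤)
    (K : IntermediateField E L)
    (F : IntermediateField E L) (hF : F ∈ SS k E L K) :
    mu1 k E L n ρ F {F} = 1 ↔ (∀ F' ∈ SS k E L K, F ≤ F' → F' = F) := by
  obtain ⟨hKF, hFsep⟩ := hF
  rw [mu1_eq_one_iff hFsep]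
  constructor
  · intro hfix F' hF' hFF'
    obtain ⟨τ, hτ⟩ := exists_isLift hF'.2 ρ
    let σ i := IntermediateField.autOfLE hFF' (τ i)
    have hF'σ : F' ≤ FixT E L n F σ := fun x hx =>
      (mem_fixT_iff σ x).mpr fun i => (τ i).commutes ⟨x, hx⟩
    exact le_antisymm (hfix σ (fun i => hτ i) ▸ hF'σ) hFF'
  · intro hmax σ hσ
    have hFσ : F ≤ FixT E L n F σ := fun x hx =>
      (mem_fixT_iff σ x).mpr fun i => (σ i).commutes ⟨x, hx⟩
    exact hmax _ ⟨hKF.trans hFσ, fixT_inf_separableClosure_eq_bot hFsep hgen hσ⟩ hFσ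

/-- for `F ∈ 𝒮(L/K)`, one has `μ¹_{L/F}({F}) = 1` if and only if `F` is
maximal with respect to inclusion in `𝒮(L/K)` (i.e. `F` is an absorbing state of the
associated Markov chain iff it is maximal). -/
theorem statement10
    (k E L : Type) [Field k] [Field E] [Field L] [PerfectField k]
    [Algebra k E] [Algebra E L] [Algebra k L] [IsScalarTower k E L]
    (hreg : IsRegularExtension k E)
    [FiniteDimensional E L] [IsGalois E L]
    [IsGalois k (separableClosure k L)]
    (n : ℕ) (hn : 1 ≤ n)
    (ρ : Fin n → (↥(separableClosure k L) ≃ₐ[k] ↥(separableClosure k L)))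
    (hgen : Subgroup.closure (Set.range ρ) = ⊤)
    (K : IntermediateField E L)
    (hK : K.restrictScalars k ⊓ separableClosure k L = ⊥)
    (F : IntermediateField E L) (hF : F ∈ SS k E L K) :
    mu1 k E L n ρ F {F} = 1 ↔ (∀ F' ∈ SS k E L K, F ≤ F' → F' = F) :=
  statement10_general k E L n ρ hgen K F hF
end

section
/- In the measure setting with the iterated measures μ^i, take K = E. Then for every F ∈ 𝒮(L/E), the sequence (μ^i_{L/E}({F}))_{i ≥ 1} converges and its limit μ^∞_{L/E}({F}) is a rational number. -/
open IntermediateField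

/-!
The measures `μⁱ_{L/K}` are the distributions of a Markov chain on the finite lattice of
intermediate fields. Its transition matrix `P` is substochastic, because any two lifts of `ρ̄`
to `Gal(L/F')` differ by an element of `Gal(L/F'·k_L)ⁿ`, and upper triangular, because
`F' ≤ Fix(ᾱ)`.
Along this order each coordinate obeys `x (i + 1) = P G G * x i + b i` with `b` convergent by
induction, so it converges: geometrically if `P G G < 1`, monotonically if `P G G = 1`.
By Cayley–Hamilton each coordinate satisfies the rational linear recurrence given by the
characteristic polynomial `χ` of `P`. Writing `χ = (X - 1) ^ a * q` with `q(1) ≠ 0`, the sequence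
`q(shift) x` tends to `q(1) · lim x` and is killed by `(shift - 1) ^ a`, so it is constant and
rational, and so is `lim x`.
-/

open Filter Topology Polynomial Matrix

section LinearRecurrence

variable (R : Type*) [CommSemiring R]

noncomputable def seqShift : Module.End R (ℕ → R) :=
  LinearMap.funLeft R R Nat.succ

variable {R}

lemma seqShift_pow_apply (j : ℕ) (s : ℕ → R) (i : ℕ) : (seqShift R ^ j) s i = s (i + j) := by
  induction j generalizing s with
  | zero => rfl
  | succ j ih => rw [pow_succ, Module.End.mul_apply, ih]; rfl

lemma aeval_seqShift_apply (p : R[X]) (s : ℕ → R) (i : ℕ) :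
    aeval (seqShift R) p s i = ∑ j ∈ Finset.range (p.natDegree + 1), p.coeff j * s (i + j) := by
  simp [aeval_eq_sum_range, Finset.sum_apply, seqShift_pow_apply]

lemma aeval_seqShift_orbit_eq_zero {ι : Type*} [Fintype ι] [DecidableEq ι] {M : Matrix ι ι R}
    {p : R[X]} (hp : aeval M p = 0) {v : ℕ → ι → R} (hv : ∀ t, v (t + 1) = v t ᵥ* M) (G : ι) :
    aeval (seqShift R) p (fun t => v t G) = 0 := by
  have hpow : ∀ i j, v (i + j) = v i ᵥ* M ^ j := by
    intro i j
    induction j with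
    | zero => simp
    | succ j ih => rw [← add_assoc, hv, ih, vecMul_vecMul, ← pow_succ]
  funext i
  have hzero : (v i ᵥ* aeval M p) G = 0 := by simp [hp]
  rw [aeval_seqShift_apply, Pi.zero_apply, ← hzero, aeval_eq_sum_range, vecMul_sum,
    Finset.sum_apply]
  simp [hpow, vecMul_smul]

lemma cast_eq_of_forall_eq_of_tendsto {v : ℕ → ℚ} {L : ℝ} (hconst : ∀ i, v i = v 0)
    (hlim : Tendsto (fun i => (v i : ℝ)) atTop (𝓝 L)) : (v 0 : ℝ) = L :=
  tendsto_nhds_unique (tendsto_const_nhds.congr fun i => by rw [hconst i]) hlim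

lemma eq_apply_zero_of_seqShift_sub_one_pow {a : ℕ} {v : ℕ → ℚ} (hv : ((seqShift ℚ - 1) ^ a) v = 0)
    {L : ℝ} (hlim : Tendsto (fun i => (v i : ℝ)) atTop (𝓝 L)) : ∀ i, v i = v 0 := by
  induction a generalizing v L with
  | zero => simp_all
  | succ a ih =>
    set w := (seqShift ℚ - 1) v
    have hw : ∀ i, w i = v (i + 1) - v i := fun i => rfl
    have hwlim : Tendsto (fun i => (w i : ℝ)) atTop (𝓝 (L - L)) := by
      simpa [hw] using (hlim.comp (tendsto_add_atTop_nat 1)).sub hlim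
    have hwconst := ih (by rwa [← Module.End.mul_apply, ← pow_succ]) hwlim
    have hw0 : w 0 = 0 := by
      exact_mod_cast (cast_eq_of_forall_eq_of_tendsto hwconst hwlim).trans (sub_self L)
    intro i
    induction i with
    | zero => rfl
    | succ i hi => rw [← hi]; linarith [hw i, hwconst i]

lemma exists_rat_eq_of_tendsto {p : ℚ[X]} (hp : p ≠ 0) {s : ℕ → ℚ}
    (hs : aeval (seqShift ℚ) p s = 0) {L : ℝ} (hlim : Tendsto (fun i => (s i : ℝ)) atTop (𝓝 L)) :
    ∃ c : ℚ, (c : ℝ) = L := by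
  set a := p.rootMultiplicity 1
  set q := p /ₘ (X - C 1) ^ a
  have hq1 : q.eval 1 ≠ 0 := eval_divByMonic_pow_rootMultiplicity_ne_zero 1 hp
  set v := aeval (seqShift ℚ) q s
  have hv : ((seqShift ℚ - 1) ^ a) v = 0 := by
    rw [← hs, ← pow_mul_divByMonic_rootMultiplicity_eq p 1, map_mul, Module.End.mul_apply]
    simp only [map_pow, map_sub, aeval_X, map_one]; rfl
  have hvlim : Tendsto (fun i => (v i : ℝ)) atTop (𝓝 ((q.eval 1 : ℚ) * L)) := by
    have hsum : Tendsto (fun i => ∑ j ∈ Finset.range (q.natDegree + 1), (q.coeff j : ℝ) * s (i + j))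
        atTop (𝓝 (∑ j ∈ Finset.range (q.natDegree + 1), (q.coeff j : ℝ) * L)) :=
      tendsto_finsetSum _ fun j _ => (hlim.comp (tendsto_add_atTop_nat j)).const_mul _
    simpa [v, aeval_seqShift_apply, eval_eq_sum_range, ← Finset.sum_mul] using hsum
  have hv0 := cast_eq_of_forall_eq_of_tendsto (eq_apply_zero_of_seqShift_sub_one_pow hv hvlim) hvlim
  refine ⟨v 0 / q.eval 1, ?_⟩
  rw [Rat.cast_div, hv0]
  field_simp

end LinearRecurrence

section ScalarRecurrence

variable {a : ℝ} {x b : ℕ → ℝ}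

lemma le_pow_mul_add_of_le_mul_add (ha : 0 ≤ a) {z : ℕ → ℝ} {δ : ℝ} (hδ : 0 ≤ δ)
    (hz : ∀ j, z (j + 1) ≤ a * z j + (1 - a) * δ) (j : ℕ) : z j ≤ a ^ j * z 0 + δ := by
  induction j with
  | zero => simpa using hδ
  | succ j ih =>
    calc z (j + 1) ≤ a * (a ^ j * z 0 + δ) + (1 - a) * δ := by grw [hz j, ih]
      _ = a ^ (j + 1) * z 0 + δ := by ring

lemma tendsto_zero_of_succ_eq_mul_add (ha₀ : 0 ≤ a) (ha₁ : a < 1)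
    (hb : Tendsto b atTop (𝓝 0)) (hx : ∀ t, x (t + 1) = a * x t + b t) :
    Tendsto x atTop (𝓝 0) := by
  rw [Metric.tendsto_atTop]
  intro ε hε
  obtain ⟨N, hN⟩ := Metric.tendsto_atTop.mp hb ((1 - a) * (ε / 2)) (by nlinarith)
  have hdecay : ∀ j, |x (j + N)| ≤ a ^ j * |x (0 + N)| + ε / 2 := by
    refine le_pow_mul_add_of_le_mul_add ha₀ (by positivity) fun j => ?_
    have hbj := hN (j + N) (by omega)
    rw [Real.dist_eq, sub_zero] at hbj
    calc |x (j + 1 + N)| = |a * x (j + N) + b (j + N)| := by rw [add_right_comm, hx]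
      _ ≤ a * |x (j + N)| + (1 - a) * (ε / 2) := by
        grw [abs_add_le, abs_mul, abs_of_nonneg ha₀, hbj.le]
  obtain ⟨J, hJ⟩ := Metric.tendsto_atTop.mp
    ((tendsto_pow_atTop_nhds_zero_of_lt_one ha₀ ha₁).mul_const |x (0 + N)|) (ε / 2) (by positivity)
  refine ⟨J + N, fun t ht => ?_⟩
  obtain ⟨j, rfl⟩ : ∃ j, t = j + N := ⟨t - N, by omega⟩
  have hj := hJ j (by omega)
  rw [Real.dist_eq, zero_mul, sub_zero, abs_of_nonneg (by positivity)] at hj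
  rw [Real.dist_eq, sub_zero]
  linarith [hdecay j]

lemma tendsto_of_succ_eq_mul_add (ha₀ : 0 ≤ a) (ha₁ : a < 1) {B : ℝ}
    (hb : Tendsto b atTop (𝓝 B)) (hx : ∀ t, x (t + 1) = a * x t + b t) :
    Tendsto x atTop (𝓝 (B / (1 - a))) := by
  have hy := tendsto_zero_of_succ_eq_mul_add (x := fun t => x t - B / (1 - a)) ha₀ ha₁
    (by simpa using hb.sub_const B) fun t => by
      rw [hx]
      field_simp [(sub_pos.mpr ha₁).ne']
      ring
  simpa using hy.add_const (B / (1 - a))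

lemma exists_tendsto_of_succ_eq_mul_add (ha₀ : 0 ≤ a) (ha₁ : a ≤ 1) (hb₀ : ∀ t, 0 ≤ b t)
    (hb : ∃ B, Tendsto b atTop (𝓝 B)) (hbdd : BddAbove (Set.range x))
    (hx : ∀ t, x (t + 1) = a * x t + b t) : ∃ l, Tendsto x atTop (𝓝 l) := by
  obtain ⟨B, hB⟩ := hb
  rcases ha₁.lt_or_eq with ha₁ | rfl
  · exact ⟨_, tendsto_of_succ_eq_mul_add ha₀ ha₁ hB hx⟩
  · refine ⟨_, tendsto_atTop_ciSup (monotone_nat_of_le_succ fun t => ?_) hbdd⟩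
    linarith [hx t, hb₀ t]

end ScalarRecurrence

section SubstochasticTriangular

open Finset

variable {ι : Type*} [Fintype ι] {P : Matrix ι ι ℝ} {v : ℕ → ι → ℝ}

lemma orbit_nonneg (hP : ∀ i j, 0 ≤ P i j) (hv₀ : ∀ i, 0 ≤ v 0 i)
    (hv : ∀ t, v (t + 1) = v t ᵥ* P) (t : ℕ) (i : ι) : 0 ≤ v t i := by
  induction t generalizing i with
  | zero => exact hv₀ i
  | succ t ih => rw [hv]; exact sum_nonneg fun k _ => mul_nonneg (ih k) (hP k i)

lemma sum_orbit_le (hP : ∀ i j, 0 ≤ P i j) (hProw : ∀ i, ∑ j, P i j ≤ 1)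
    (hv₀ : ∀ i, 0 ≤ v 0 i) (hv : ∀ t, v (t + 1) = v t ᵥ* P) (t : ℕ) :
    ∑ i, v t i ≤ ∑ i, v 0 i := by
  induction t with
  | zero => rfl
  | succ t ih =>
    calc ∑ j, v (t + 1) j = ∑ i, v t i * ∑ j, P i j := by
          simp only [hv, vecMul, dotProduct, mul_sum]
          exact sum_comm
      _ ≤ ∑ i, v t i :=
          sum_le_sum fun i _ => mul_le_of_le_one_right (orbit_nonneg hP hv₀ hv t i) (hProw i)
      _ ≤ ∑ i, v 0 i := ih

lemma orbit_succ_apply [DecidableEq ι] (hv : ∀ t, v (t + 1) = v t ᵥ* P) (t : ℕ) (j : ι) :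
    v (t + 1) j = P j j * v t j + ∑ i ∈ univ.erase j, v t i * P i j := by
  rw [hv, vecMul, dotProduct, ← add_sum_erase _ _ (mem_univ j), mul_comm]

theorem exists_tendsto_orbit_apply [PartialOrder ι] (hP : ∀ i j, 0 ≤ P i j)
    (hProw : ∀ i, ∑ j, P i j ≤ 1) (htri : ∀ i j, P i j ≠ 0 → i ≤ j) (hv₀ : ∀ i, 0 ≤ v 0 i)
    (hv : ∀ t, v (t + 1) = v t ᵥ* P) (j : ι) : ∃ l, Tendsto (fun t => v t j) atTop (𝓝 l) := by
  classical
  induction j using WellFoundedLT.induction with | _ j ih => ?_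
  have hin : ∀ i ∈ univ.erase j, ∃ l, Tendsto (fun t => v t i * P i j) atTop (𝓝 l) := by
    intro i hi
    by_cases hij : P i j = 0
    · exact ⟨0, by simp [hij]⟩
    · obtain ⟨l, hl⟩ := ih i ((htri i j hij).lt_of_ne (ne_of_mem_erase hi))
      exact ⟨l * P i j, hl.mul_const _⟩
  choose! l hl using hin
  refine exists_tendsto_of_succ_eq_mul_add (hP j j)
    ((single_le_sum (fun k _ => hP j k) (mem_univ j)).trans (hProw j))
    (fun t => sum_nonneg fun i _ => mul_nonneg (orbit_nonneg hP hv₀ hv t i) (hP i j))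
    ⟨_, tendsto_finsetSum _ hl⟩ ⟨∑ i, v 0 i, ?_⟩ (orbit_succ_apply hv · j)
  rintro _ ⟨t, rfl⟩
  exact (single_le_sum (fun i _ => orbit_nonneg hP hv₀ hv t i) (mem_univ j)).trans
    (sum_orbit_le hP hProw hv₀ hv t)

end SubstochasticTriangular

theorem exists_rat_tendsto_orbit_apply {ι : Type*} [Fintype ι] [DecidableEq ι] [PartialOrder ι]
    {P : Matrix ι ι ℚ}
    (hP : ∀ i j, 0 ≤ P i j) (hProw : ∀ i, ∑ j, P i j ≤ 1) (htri : ∀ i j, P i j ≠ 0 → i ≤ j)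
    {v : ℕ → ι → ℚ} (hv₀ : ∀ i, 0 ≤ v 0 i) (hv : ∀ t, v (t + 1) = v t ᵥ* P) (j : ι) :
    ∃ c : ℚ, Tendsto (fun t => (v t j : ℝ)) atTop (𝓝 c) := by
  have hv' (t : ℕ) : (fun i => (v (t + 1) i : ℝ)) = (fun i => (v t i : ℝ)) ᵥ* P.map (↑) :=
    funext fun i => by
      simpa [hv, Function.comp_def] using RingHom.map_vecMul (Rat.castHom ℝ) P (v t) i
  obtain ⟨l, hl⟩ := exists_tendsto_orbit_apply (v := fun t i => (v t i : ℝ))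
    (fun i j => Rat.cast_nonneg.mpr (hP i j))
    (fun i => by simpa using (Rat.cast_le (K := ℝ)).mpr (hProw i))
    (fun i j hij => htri i j fun h => hij (by simp [h])) (fun i => Rat.cast_nonneg.mpr (hv₀ i))
    hv' j
  obtain ⟨c, rfl⟩ := exists_rat_eq_of_tendsto P.charpoly_monic.ne_zero
    (aeval_seqShift_orbit_eq_zero (aeval_self_charpoly P) hv j) hl
  exact ⟨c, hl⟩

section GaloisTransition

lemma Nat.sum_card_subtype_and_eq {A B : Type*} [Finite A] [Fintype B] (p : A → Prop) (f : A → B) :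
    ∑ b, Nat.card {a // p a ∧ f a = b} = Nat.card {a // p a} := by
  classical
  have := Fintype.ofFinite A
  simp only [Nat.card_eq_fintype_card, Fintype.card_subtype]
  rw [Finset.card_eq_sum_card_fiberwise (f := f) (t := Finset.univ) (by simp)]
  simp [Finset.filter_filter]

variable {k E L : Type} [Field k] [Field E] [Field L] [Algebra E L] [Algebra k L] {n : ℕ}
  (ρ : Fin n → (↥(separableClosure k L) ≃ₐ[k] ↥(separableClosure k L)))

lemma le_FixT (K : IntermediateField E L) (σ : Fin n → (L ≃ₐ[K] L)) : K ≤ FixT E L n K σ :=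
  fun x hx => (mem_fixedField_iff _ x).mpr fun g _ => g.commutes ⟨x, hx⟩

lemma mu1_nonneg (K : IntermediateField E L) (X : Set (IntermediateField E L)) :
    0 ≤ mu1 k E L n ρ K X := by
  unfold mu1
  positivity

lemma mu1_singleton_eq_zero_of_not_le {K G : IntermediateField E L} (h : ¬K ≤ G) :
    mu1 k E L n ρ K {G} = 0 := by
  have : IsEmpty {α // IsLift k E L n K ρ α ∧ FixT E L n K α = G} :=
    ⟨fun α => h (α.2.2 ▸ le_FixT K α.1)⟩
  simp [mu1]

lemma inv_mul_mem_fixingSubgroup_compKL {K : IntermediateField E L} {σ τ : L ≃ₐ[K] L}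
    {ρ₀ : ↥(separableClosure k L) ≃ₐ[k] ↥(separableClosure k L)}
    (hσ : RestrictsTo k E L K σ ρ₀) (hτ : RestrictsTo k E L K τ ρ₀) :
    σ⁻¹ * τ ∈ (compKL k E L K).fixingSubgroup :=
  (IntermediateField.mem_fixingSubgroup_iff _ _).mpr <|
    (forall_mem_adjoin_smul_eq_self_iff _ (σ⁻¹ * τ)).mpr fun x hx => by
      rw [AlgEquiv.smul_def, AlgEquiv.mul_apply, hτ ⟨x, hx⟩, ← hσ ⟨x, hx⟩, AlgEquiv.aut_inv,
        AlgEquiv.symm_apply_apply]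

section Transition

variable [Algebra k E] [IsScalarTower k E L]

noncomputable def transitionMatrix (K : IntermediateField E L) :
    Matrix (IntermediateField E L) (IntermediateField E L) ℚ :=
  Matrix.of fun F' G => (SS k E L K).indicator (fun F' => mu1 k E L n ρ F' {G}) F'

lemma transitionMatrix_nonneg (K F' G : IntermediateField E L) :
    0 ≤ transitionMatrix ρ K F' G :=
  Set.indicator_nonneg (fun F' _ => mu1_nonneg ρ F' {G}) F'

lemma le_of_transitionMatrix_ne_zero {K F' G : IntermediateField E L}
    (h : transitionMatrix ρ K F' G ≠ 0) : F' ≤ G := by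
  by_contra hle
  simp [transitionMatrix, mu1_singleton_eq_zero_of_not_le ρ hle] at h

lemma muI_succ [Fintype (IntermediateField E L)] (K : IntermediateField E L) (i : ℕ) :
    muI k E L n ρ K (i + 1) = muI k E L n ρ K i ᵥ* transitionMatrix ρ K := by
  funext G
  rw [muI, finsum_mem_def, finsum_eq_sum_of_fintype]
  simp [vecMul, dotProduct, transitionMatrix, ← Set.indicator_mul_right]

end Transition

variable [FiniteDimensional E L] [IsGalois E L]

lemma natCard_isLift_le (K : IntermediateField E L) :
    Nat.card {α // IsLift k E L n K ρ α} ≤ Module.finrank (compKL k E L K) L ^ n := by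
  rcases isEmpty_or_nonempty {α // IsLift k E L n K ρ α} with h | ⟨α₀, h₀⟩
  · simp
  calc Nat.card {α // IsLift k E L n K ρ α}
      ≤ Nat.card (Fin n → (compKL k E L K).fixingSubgroup) :=
        Nat.card_le_card_of_injective
          (fun α i => ⟨(α₀ i)⁻¹ * α.1 i, inv_mul_mem_fixingSubgroup_compKL (h₀ i) (α.2 i)⟩)
          fun α β hαβ => Subtype.ext <| funext fun i =>
            mul_left_cancel (congrArg Subtype.val (congrFun hαβ i))
    _ = Module.finrank (compKL k E L K) L ^ n := by
        rw [Nat.card_fun, Nat.card_fin, IsGalois.card_fixingSubgroup_eq_finrank]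

lemma sum_mu1_singleton_le_one [Fintype (IntermediateField E L)] (K : IntermediateField E L) :
    ∑ G, mu1 k E L n ρ K {G} ≤ 1 := by
  have hdeg : 0 < Module.finrank (compKL k E L K) L := Module.finrank_pos
  simp only [mu1, Set.mem_singleton_iff, ← Finset.sum_div]
  rw [div_le_one (by positivity)]
  exact_mod_cast (Nat.sum_card_subtype_and_eq _ _).trans_le (natCard_isLift_le ρ K)

variable [Algebra k E] [IsScalarTower k E L]

lemma sum_transitionMatrix_le_one [Fintype (IntermediateField E L)] (K F' : IntermediateField E L) :
    ∑ G, transitionMatrix ρ K F' G ≤ 1 :=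
  (Finset.sum_le_sum fun G _ =>
    Set.indicator_le_self' (fun F' _ => mu1_nonneg ρ F' {G}) F').trans
    (sum_mu1_singleton_le_one ρ F')

lemma exists_rat_tendsto_muI (K G : IntermediateField E L) :
    ∃ c : ℚ, Tendsto (fun i => (muI k E L n ρ K i G : ℝ)) atTop (𝓝 c) := by
  classical
  have := Field.finite_intermediateField_of_exists_primitive_element E L
    (Field.exists_primitive_element E L)
  have := Fintype.ofFinite (IntermediateField E L)
  exact exists_rat_tendsto_orbit_apply (transitionMatrix_nonneg ρ K)
    (sum_transitionMatrix_le_one ρ K) (fun _ _ => le_of_transitionMatrix_ne_zero ρ)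
    (Set.indicator_nonneg fun _ _ => zero_le_one) (muI_succ ρ K) G

end GaloisTransition

theorem statement13_general
    (k E L : Type) [Field k] [Field E] [Field L]
    [Algebra k E] [Algebra E L] [Algebra k L] [IsScalarTower k E L]
    [FiniteDimensional E L] [IsGalois E L]
    (n : ℕ)
    (ρ : Fin n → (↥(separableClosure k L) ≃ₐ[k] ↥(separableClosure k L)))
    (F : IntermediateField E L) :
    ∃ c : ℚ, Tendsto (fun i : ℕ => (muI k E L n ρ ⊥ i F : ℝ)) atTop (𝓝 (c : ℝ)) :=
  exists_rat_tendsto_muI ρ ⊥ F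

/-- with `K = E` (the bottom intermediate field), for every `F ∈ 𝒮(L/E)`
the sequence `(μⁱ_{L/E}({F}))_{i ≥ 1}` converges and its limit `μ^∞_{L/E}({F})` is a
rational number. -/
theorem statement13
    (k E L : Type) [Field k] [Field E] [Field L] [PerfectField k]
    [Algebra k E] [Algebra E L] [Algebra k L] [IsScalarTower k E L]
    (hreg : IsRegularExtension k E)
    [FiniteDimensional E L] [IsGalois E L]
    [IsGalois k (separableClosure k L)]
    (n : ℕ) (hn : 1 ≤ n)
    (ρ : Fin n → (↥(separableClosure k L) ≃ₐ[k] ↥(separableClosure k L)))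
    (hgen : Subgroup.closure (Set.range ρ) = ⊤)
    (F : IntermediateField E L) (hF : F ∈ SS k E L ⊥) :
    ∃ c : ℚ, Tendsto (fun i : ℕ => (muI k E L n ρ ⊥ i F : ℝ)) atTop (𝓝 (c : ℝ)) :=
  statement13_general k E L n ρ F
end
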